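/- Let ε > 0 and let p : ℕ → [0,1] satisfy n·p(n) ≥ (1+ε)·log n for all large n. Then the probability that the Erdős–Rényi random graph G(n, p(n)) is connected tends to 1 as n → ∞. -/

import Mathlib

open scoped Classical

/-- The number of edges of a simple graph on `Fin n`. -/
noncomputable def edgeCount {n : ℕ} (g : SimpleGraph (Fin n)) : ℕ := g.edgeSet.ncard

/-- The probability, under the Erdős–Rényi model `G(n,p)` (each of the `C(n,2)` possible
edges present independently with probability `p`), of a set `E` of graphs on `[n]`. -/
noncomputable def erProb (n : ℕ) (p : ℝ) (E : Set (SimpleGraph (Fin n))) : ℝ :=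
  ∑ g ∈ Finset.univ.filter (fun g : SimpleGraph (Fin n) => g ∈ E),
    p ^ edgeCount g * (1 - p) ^ (n.choose 2 - edgeCount g)

/-!
A graph on `[n]` is disconnected iff some `S` with `0 < |S| < n` sends no edge to its
complement, which for `|S| = k` happens with probability `(1 - p)^(k(n-k))`. Hence
`P(disconnected) ≤ ∑_{0<k<n} C(n,k) (1-p)^(k(n-k))`, and by the symmetry `k ↔ n - k` it suffices
to bound the terms with `k ≤ n/2`, using `1 - p ≤ exp(-p)` and `np ≥ (1+ε) log n`.
If `k ≤ εn / (2(1+ε))`, then `n - k ≥ (1+ε/2) n / (1+ε)` and `C(n,k) ≤ n^k` is beaten by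
`n^{-(1+ε/2)k}`, leaving `n^{-εk/2}`, whose sum over `k` is `O(n^{-ε/2})`. Otherwise the cut has
at least `εn²/(4(1+ε))` potential edges and `C(n,k) ≤ 2^n` is beaten by `n^{-εn/4}`.
-/

open Finset Real Filter Topology

namespace SimpleGraph

variable {V : Type*}

theorem edgeSet_fromEdgeSet_of_subset {s : Set (Sym2 V)}
    (hs : s ⊆ (⊤ : SimpleGraph V).edgeSet) : (fromEdgeSet s).edgeSet = s := by
  rw [edgeSet_fromEdgeSet, sdiff_eq_left, ← Set.subset_compl_iff_disjoint_right, ← edgeSet_top]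
  exact hs

variable [Fintype V] [DecidableEq V]

def cutEdges (S : Finset V) : Finset (Sym2 V) := (S ×ˢ Sᶜ).image fun x => s(x.1, x.2)

theorem card_cutEdges (S : Finset V) : #(cutEdges S) = #S * (Fintype.card V - #S) := by
  rw [cutEdges, card_image_of_injOn, card_product, card_compl]
  rintro ⟨a, b⟩ hab ⟨c, d⟩ hcd h
  simp only [coe_product, Set.mem_prod, mem_coe, coe_compl, Set.mem_compl_iff] at hab hcd
  rcases Sym2.eq_iff.mp h with ⟨rfl, rfl⟩ | ⟨rfl, rfl⟩
  · rfl
  · exact absurd hab.1 hcd.2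

theorem cutEdges_subset_edgeFinset_top (S : Finset V) :
    cutEdges S ⊆ (⊤ : SimpleGraph V).edgeFinset := by
  simp only [cutEdges, subset_iff, mem_image, mem_product, mem_compl, mem_edgeFinset,
    edgeSet_top]
  rintro _ ⟨⟨a, b⟩, ⟨ha, hb⟩, rfl⟩
  exact fun hab => hb (Sym2.mk_isDiag_iff.mp hab ▸ ha)

theorem disjoint_edgeFinset_cutEdges_iff (G : SimpleGraph V) [Fintype G.edgeSet] (S : Finset V) :
    Disjoint G.edgeFinset (cutEdges S) ↔ ∀ a ∈ S, ∀ b ∉ S, ¬ G.Adj a b := by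
  simp only [disjoint_right, cutEdges, mem_image, mem_product, mem_compl, mem_edgeFinset]
  exact ⟨fun h a ha b hb => h ⟨(a, b), ⟨ha, hb⟩, rfl⟩,
    fun h _ ⟨_, ⟨ha, hb⟩, he⟩ => he ▸ h _ ha _ hb⟩

theorem exists_cut_of_not_connected [Nonempty V] {G : SimpleGraph V} (h : ¬ G.Connected) :
    ∃ S : Finset V, 0 < #S ∧ #S < Fintype.card V ∧ ∀ a ∈ S, ∀ b ∉ S, ¬ G.Adj a b := by
  obtain ⟨u, v, huv⟩ : ∃ u v, ¬ G.Reachable u v := by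
    simpa [connected_iff, Preconnected] using h
  refine ⟨univ.filter (G.Reachable u), card_pos.mpr ⟨u, by simp⟩,
    card_lt_univ_of_notMem (x := v) (by simpa using huv), ?_⟩
  simp only [mem_filter, mem_univ, true_and]
  exact fun a ha b hb hab => hb (ha.trans hab.reachable)

end SimpleGraph

section ErdosRenyi

open SimpleGraph

variable {n : ℕ} {p : ℝ}

theorem erProb_nonneg (hp₀ : 0 ≤ p) (hp₁ : p ≤ 1) (E : Set (SimpleGraph (Fin n))) :
    0 ≤ erProb n p E :=
  sum_nonneg fun _ _ => mul_nonneg (pow_nonneg hp₀ _) (pow_nonneg (sub_nonneg.2 hp₁) _)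

theorem erProb_le_sum_of_subset_biUnion (hp₀ : 0 ≤ p) (hp₁ : p ≤ 1) {ι : Type*} {I : Finset ι}
    {E : Set (SimpleGraph (Fin n))} {A : ι → Set (SimpleGraph (Fin n))}
    (hE : E ⊆ ⋃ i ∈ I, A i) : erProb n p E ≤ ∑ i ∈ I, erProb n p (A i) := by
  simp only [erProb, sum_filter]
  rw [sum_comm]
  refine sum_le_sum fun g _ => ?_
  have hw : 0 ≤ p ^ edgeCount g * (1 - p) ^ (n.choose 2 - edgeCount g) :=
    mul_nonneg (pow_nonneg hp₀ _) (pow_nonneg (sub_nonneg.2 hp₁) _)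
  have hterm : ∀ i, 0 ≤ if g ∈ A i then p ^ edgeCount g * (1 - p) ^ (n.choose 2 - edgeCount g)
      else 0 := fun i => by split_ifs <;> simp [hw]
  split_ifs with hg
  · obtain ⟨i, hi, hgi⟩ := Set.mem_iUnion₂.mp (hE hg)
    exact (if_pos hgi).symm.trans_le (single_le_sum (fun j _ => hterm j) hi)
  · exact sum_nonneg fun j _ => hterm j

theorem edgeCount_eq_card_edgeFinset (g : SimpleGraph (Fin n)) : edgeCount g = #g.edgeFinset := by
  rw [edgeCount, ← coe_edgeFinset, Set.ncard_coe_finset]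

theorem erProb_disjoint_edgeFinset {C : Finset (Sym2 (Fin n))}
    (hC : C ⊆ (⊤ : SimpleGraph (Fin n)).edgeFinset) :
    erProb n p {g | Disjoint g.edgeFinset C} = (1 - p) ^ #C := by
  set K := (⊤ : SimpleGraph (Fin n)).edgeFinset
  have hN : n.choose 2 = #(K \ C) + #C := by
    rw [card_sdiff_add_card_eq_card hC, card_edgeFinset_top_eq_card_choose_two, Fintype.card_fin]
  have hfrom : ∀ t ⊆ K, (fromEdgeSet (t : Set (Sym2 (Fin n)))).edgeSet = t := fun t ht =>
    edgeSet_fromEdgeSet_of_subset fun e he => mem_edgeFinset.mp (ht he)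
  calc erProb n p {g | Disjoint g.edgeFinset C}
      = ∑ t ∈ (K \ C).powerset, p ^ #t * (1 - p) ^ (n.choose 2 - #t) := by
        refine sum_nbij' (·.edgeFinset) (fromEdgeSet ·) ?_ ?_ ?_ ?_ ?_
        · intro g hg
          simp only [mem_filter, mem_univ, Set.mem_ofPred_eq, true_and] at hg
          exact mem_powerset.mpr (subset_sdiff.mpr ⟨edgeFinset_mono le_top, hg⟩)
        · intro t ht
          have ht' := subset_sdiff.mp (mem_powerset.mp ht)
          simp only [mem_filter, mem_univ, Set.mem_ofPred_eq, true_and]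
          rw [← disjoint_coe, coe_edgeFinset, hfrom t ht'.1, disjoint_coe]
          exact ht'.2
        · intro g _
          simp only [coe_edgeFinset, fromEdgeSet_edgeSet]
        · intro t ht
          exact coe_injective <| by
            rw [coe_edgeFinset, hfrom t (subset_sdiff.mp (mem_powerset.mp ht)).1]
        · intro g _
          simp only [edgeCount_eq_card_edgeFinset]
    _ = ∑ t ∈ (K \ C).powerset, p ^ #t * (1 - p) ^ (#(K \ C) - #t) * (1 - p) ^ #C := by
        refine sum_congr rfl fun t ht => ?_
        rw [hN, mul_assoc, ← pow_add, Nat.sub_add_comm (card_le_card (mem_powerset.mp ht))]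
    _ = (1 - p) ^ #C := by rw [← sum_mul, sum_pow_mul_eq_add_pow]; simp

theorem erProb_compl (E : Set (SimpleGraph (Fin n))) : erProb n p Eᶜ = 1 - erProb n p E := by
  have huniv : erProb n p Set.univ = 1 := by
    simpa using erProb_disjoint_edgeFinset (p := p) (empty_subset _)
  have hsplit : erProb n p E + erProb n p Eᶜ = erProb n p Set.univ := by
    simp only [erProb, sum_filter, ← sum_add_distrib]
    refine sum_congr rfl fun g _ => ?_
    by_cases hg : g ∈ E <;> simp [hg]
  linarith

theorem erProb_cut (S : Finset (Fin n)) :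
    erProb n p {g | Disjoint g.edgeFinset (cutEdges S)} = (1 - p) ^ (#S * (n - #S)) := by
  rw [erProb_disjoint_edgeFinset (cutEdges_subset_edgeFinset_top S), card_cutEdges,
    Fintype.card_fin]

theorem erProb_not_connected_le (hp₀ : 0 ≤ p) (hp₁ : p ≤ 1) (hn : 0 < n) :
    erProb n p {g | ¬ g.Connected} ≤ ∑ k ∈ Ico 1 n, (n.choose k : ℝ) * (1 - p) ^ (k * (n - k)) := by
  have : Nonempty (Fin n) := ⟨⟨0, hn⟩⟩
  calc erProb n p {g | ¬ g.Connected}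
      ≤ ∑ x ∈ (Ico 1 n).sigma fun k => powersetCard k univ,
          erProb n p {g | Disjoint g.edgeFinset (cutEdges x.2)} := by
        refine erProb_le_sum_of_subset_biUnion hp₀ hp₁ fun g hg => ?_
        obtain ⟨S, hS₀, hSn, hcut⟩ := exists_cut_of_not_connected hg
        simp only [Set.mem_iUnion, mem_sigma, mem_Ico, mem_powersetCard]
        exact ⟨⟨#S, S⟩, ⟨⟨hS₀, by simpa using hSn⟩, subset_univ S, rfl⟩,
          (disjoint_edgeFinset_cutEdges_iff g S).mpr hcut⟩
    _ = ∑ k ∈ Ico 1 n, (n.choose k : ℝ) * (1 - p) ^ (k * (n - k)) := by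
        rw [sum_sigma]
        refine sum_congr rfl fun k _ => ?_
        rw [sum_congr rfl fun S hS => by rw [erProb_cut, (mem_powersetCard.mp hS).2], sum_const,
          card_powersetCard, card_univ, Fintype.card_fin, nsmul_eq_mul]

end ErdosRenyi

theorem one_sub_pow_le_exp_neg_mul {p : ℝ} (hp : p ≤ 1) (N : ℕ) : (1 - p) ^ N ≤ exp (-(p * N)) :=
  calc (1 - p) ^ N ≤ exp (-p) ^ N := pow_le_pow_left₀ (sub_nonneg.2 hp) (one_sub_le_exp_neg p) N
    _ = exp (-(p * N)) := by rw [← exp_nat_mul]; ring_nf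

theorem choose_mul_one_sub_pow_le_of_two_mul_le {ε p : ℝ} {n k : ℕ} (hε : 0 < ε) (hn : 2 ≤ n)
    (hp : p ≤ 1) (hnp : (1 + ε) * log n ≤ n * p) (hk : 2 * k ≤ n) :
    n.choose k * (1 - p) ^ (k * (n - k))
      ≤ exp (-(ε / 2 * log n)) ^ k + (2 * exp (-(ε / 4 * log n))) ^ n := by
  set L := log n
  have hn₀ : (0 : ℝ) < n := by positivity
  have hL : 0 ≤ L := log_nonneg (by exact_mod_cast (by omega : 1 ≤ n))
  have hk' : (2 * k : ℝ) ≤ n := by exact_mod_cast hk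
  have hcut : (1 - p) ^ (k * (n - k)) ≤ exp (-(p * (k * (n - k)))) := by
    have := one_sub_pow_le_exp_neg_mul hp (k * (n - k))
    rwa [Nat.cast_mul, Nat.cast_sub (by omega)] at this
  have hnpk : (1 + ε) * L * (k * (n - k)) ≤ n * (p * (k * (n - k))) := by
    have : (0 : ℝ) ≤ k * (n - k) := by nlinarith
    nlinarith
  have hr : 0 ≤ exp (-(ε / 2 * L)) ^ k := by positivity
  have hs : 0 ≤ (2 * exp (-(ε / 4 * L))) ^ n := by positivity
  rcases le_or_gt (2 * (1 + ε) * k) (ε * n) with hsmall | hbig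
  · have hexp : (1 + ε / 2) * L * k ≤ p * (k * (n - k)) := by
      refine le_of_mul_le_mul_left ?_ hn₀
      nlinarith [mul_nonneg hL (Nat.cast_nonneg (α := ℝ) k)]
    calc n.choose k * (1 - p) ^ (k * (n - k)) ≤ exp L ^ k * exp (-(p * (k * (n - k)))) := by
          gcongr
          rw [exp_log hn₀]; exact_mod_cast Nat.choose_le_pow n k
      _ = exp (k * L - p * (k * (n - k))) := by rw [← exp_nat_mul, ← exp_add]; ring_nf
      _ ≤ exp (-(ε / 2 * L)) ^ k := by rw [← exp_nat_mul]; gcongr; nlinarith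
      _ ≤ _ := le_add_of_nonneg_right hs
  · have hexp : ε / 4 * L * n ≤ p * (k * (n - k)) := by
      have hcard : ε * n * n ≤ 4 * (1 + ε) * (k * (n - k)) := by
        nlinarith [mul_le_mul hbig.le (by linarith : (n : ℝ) ≤ 2 * (n - k)) (by positivity)
          (by positivity)]
      refine le_of_mul_le_mul_left ?_ hn₀
      nlinarith [mul_le_mul_of_nonneg_left hcard hL]
    calc n.choose k * (1 - p) ^ (k * (n - k)) ≤ 2 ^ n * exp (-(p * (k * (n - k)))) := by
          gcongr
          exact_mod_cast Nat.choose_le_two_pow n k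
      _ ≤ 2 ^ n * exp (-(ε / 4 * L)) ^ n := by rw [← exp_nat_mul]; gcongr; nlinarith
      _ = _ := by rw [mul_pow]
      _ ≤ _ := le_add_of_nonneg_left hr

theorem choose_mul_one_sub_pow_le {ε p : ℝ} {n k : ℕ} (hε : 0 < ε) (hn : 2 ≤ n)
    (hp : p ≤ 1) (hnp : (1 + ε) * log n ≤ n * p) (hk : k ≤ n) :
    n.choose k * (1 - p) ^ (k * (n - k))
      ≤ exp (-(ε / 2 * log n)) ^ k + exp (-(ε / 2 * log n)) ^ (n - k)
        + (2 * exp (-(ε / 4 * log n))) ^ n := by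
  rcases le_total (2 * k) n with hk₂ | hk₂
  · have := choose_mul_one_sub_pow_le_of_two_mul_le hε hn hp hnp hk₂
    linarith [pow_nonneg (exp_pos (-(ε / 2 * log n))).le (n - k)]
  · have := choose_mul_one_sub_pow_le_of_two_mul_le (k := n - k) hε hn hp hnp (by omega)
    rw [Nat.choose_symm hk, Nat.sub_sub_self hk, Nat.mul_comm (n - k) k, mul_comm] at this
    linarith [pow_nonneg (exp_pos (-(ε / 2 * log n))).le k]

theorem sum_choose_mul_one_sub_pow_le {ε p : ℝ} {n : ℕ} (hε : 0 < ε) (hn : 2 ≤ n)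
    (hp : p ≤ 1) (hnp : (1 + ε) * log n ≤ n * p) :
    ∑ k ∈ Ico 1 n, (n.choose k : ℝ) * (1 - p) ^ (k * (n - k))
      ≤ 2 * (exp (-(ε / 2 * log n)) / (1 - exp (-(ε / 2 * log n))))
        + n * (2 * exp (-(ε / 4 * log n))) ^ n := by
  set r := exp (-(ε / 2 * log n))
  set s := 2 * exp (-(ε / 4 * log n))
  have hr₁ : r < 1 := by
    have : 0 < log n := log_pos (by exact_mod_cast (by omega : 1 < n))
    exact exp_lt_one_iff.mpr (by nlinarith)
  have hgeom : ∑ k ∈ Ico 1 n, r ^ k ≤ r / (1 - r) := by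
    simpa using geom_sum_Ico_le_of_lt_one (m := 1) (n := n) (exp_pos _).le hr₁
  calc ∑ k ∈ Ico 1 n, (n.choose k : ℝ) * (1 - p) ^ (k * (n - k))
      ≤ ∑ k ∈ Ico 1 n, (r ^ k + r ^ (n - k) + s ^ n) :=
        sum_le_sum fun k hk => choose_mul_one_sub_pow_le hε hn hp hnp (mem_Ico.mp hk).2.le
    _ = 2 * ∑ k ∈ Ico 1 n, r ^ k + (n - 1 : ℕ) * s ^ n := by
        rw [sum_add_distrib, sum_add_distrib, sum_Ico_reflect _ _ le_self_add, sum_const,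
          Nat.card_Ico, nsmul_eq_mul, Nat.add_sub_cancel_left, Nat.add_sub_cancel, two_mul]
    _ ≤ 2 * (r / (1 - r)) + n * s ^ n := by
        gcongr
        exact_mod_cast Nat.sub_le n 1

theorem tendsto_exp_neg_mul_log_natCast {c : ℝ} (hc : 0 < c) :
    Tendsto (fun n : ℕ => exp (-(c * log n))) atTop (𝓝 0) :=
  tendsto_exp_atBot.comp <| tendsto_neg_atTop_atBot.comp <|
    (tendsto_log_atTop.comp tendsto_natCast_atTop_atTop).const_mul_atTop hc

theorem tendsto_sum_choose_mul_one_sub_pow {ε : ℝ} (hε : 0 < ε) {p : ℕ → ℝ} (hp : ∀ n, p n ≤ 1)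
    (hnp : ∀ᶠ n : ℕ in atTop, (1 + ε) * log n ≤ n * p n) :
    Tendsto (fun n => ∑ k ∈ Ico 1 n, (n.choose k : ℝ) * (1 - p n) ^ (k * (n - k)))
      atTop (𝓝 0) := by
  have hsmall : Tendsto (fun n : ℕ => 2 * (exp (-(ε / 2 * log n)) / (1 - exp (-(ε / 2 * log n)))))
      atTop (𝓝 0) := by
    have hr := tendsto_exp_neg_mul_log_natCast (half_pos hε)
    simpa using (hr.div (tendsto_const_nhds.sub hr) (by norm_num)).const_mul 2
  have hlarge : Tendsto (fun n : ℕ => n * (2 * exp (-(ε / 4 * log n))) ^ n) atTop (𝓝 0) := by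
    have hs : ∀ᶠ n : ℕ in atTop, 2 * exp (-(ε / 4 * log n)) ≤ 1 / 2 := by
      have := (tendsto_exp_neg_mul_log_natCast (by positivity : 0 < ε / 4)).const_mul 2
      exact (mul_zero (2 : ℝ) ▸ this).eventually (Iic_mem_nhds (by norm_num))
    refine squeeze_zero' (Eventually.of_forall fun n => by positivity) ?_
      (tendsto_self_mul_const_pow_of_lt_one (by norm_num) (by norm_num : (1 / 2 : ℝ) < 1))
    filter_upwards [hs] with n hn
    gcongr
  refine squeeze_zero' (Eventually.of_forall fun n => sum_nonneg fun k _ => ?_) ?_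
    (by simpa using hsmall.add hlarge)
  · have := sub_nonneg.2 (hp n)
    positivity
  · filter_upwards [hnp, eventually_ge_atTop 2] with n hn hn₂
    exact sum_choose_mul_one_sub_pow_le hε hn₂ (hp n) hn

/-- If `n·p(n) ≥ (1+ε)·log n` for all large `n`, then the Erdős–Rényi graph `G(n, p(n))`
is connected with probability tending to `1` as `n → ∞`. -/
theorem stmt_1 (ε : ℝ) (hε : 0 < ε) (p : ℕ → ℝ)
    (hp : ∀ n, p n ∈ Set.Icc (0 : ℝ) 1)
    (h : ∀ᶠ (n : ℕ) in Filter.atTop, (1 + ε) * Real.log n ≤ (n : ℝ) * p n) :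
    Filter.Tendsto
      (fun n => erProb n (p n) {g : SimpleGraph (Fin n) | g.Connected})
      Filter.atTop (nhds 1) := by
  have hdisc : Tendsto (fun n => erProb n (p n) {g | ¬ g.Connected}) atTop (𝓝 0) := by
    refine squeeze_zero' (Eventually.of_forall fun n => erProb_nonneg (hp n).1 (hp n).2 _) ?_
      (tendsto_sum_choose_mul_one_sub_pow hε (fun n => (hp n).2) h)
    filter_upwards [eventually_gt_atTop 0] with n hn
    exact erProb_not_connected_le (hp n).1 (hp n).2 hn
  have hconn : ∀ n, erProb n (p n) {g | g.Connected} = 1 - erProb n (p n) {g | ¬ g.Connected} :=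
    fun n => by rw [← erProb_compl, Set.compl_ofPred]; simp only [not_not]
  simpa [hconn] using (tendsto_const_nhds (x := (1 : ℝ))).sub hdisc
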